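/- arXiv:1406.6044 — 7 statements merged into one kernel-verified Lean document; each statement's English description precedes it below -/
import Mathlib

section
/- Let a, b be real numbers with b > 0 and a·b ≥ 1/4. Then for all natural numbers k and l, D(l + k) ≥ b^(2^k − 1) · D(l)^(2^k). -/
theorem stmt_1 (a b : ℝ) (hb : 0 < b) (hab : a * b ≥ 1/4)
    (D : ℕ → ℝ) (hD0 : D 0 = 1) (hD : ∀ n, D (n + 1) = a + b * D n ^ 2) :
    ∀ k l : ℕ, D (l + k) ≥ b ^ (2 ^ k - 1) * D l ^ (2 ^ k) := by
  have ha : 0 < a := by nlinarith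
  have hpos : ∀ n, 0 < D n := by
    intro n
    induction n with
    | zero => simp [hD0]
    | succ m ih => rw [hD]; nlinarith [sq_nonneg (D m)]
  intro k l
  induction k with
  | zero => simp
  | succ k ih =>
    have h1 : (1:ℕ) ≤ 2 ^ k := Nat.one_le_two_pow
    have hrhs : 0 ≤ b ^ (2 ^ k - 1) * D l ^ (2 ^ k) :=
      mul_nonneg (pow_nonneg hb.le _) (pow_nonneg (hpos l).le _)
    have hsq : (b ^ (2 ^ k - 1) * D l ^ (2 ^ k)) ^ 2 ≤ D (l + k) ^ 2 :=
      pow_le_pow_left₀ hrhs ih 2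
    have e1 : 2 ^ (k + 1) - 1 = (2 ^ k - 1) * 2 + 1 := by
      have : 2 ^ (k + 1) = 2 * 2 ^ k := by rw [pow_succ]; ring
      omega
    have e2 : 2 ^ (k + 1) = 2 ^ k * 2 := by rw [pow_succ]
    have heq : b * (b ^ (2 ^ k - 1) * D l ^ (2 ^ k)) ^ 2
        = b ^ (2 ^ (k + 1) - 1) * D l ^ (2 ^ (k + 1)) := by
      rw [mul_pow, ← pow_mul, ← pow_mul, e1, e2, pow_succ]
      ring
    have : D (l + (k + 1)) = a + b * D (l + k) ^ 2 := by
      rw [show l + (k + 1) = (l + k) + 1 from rfl, hD]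
    rw [this, ← heq]
    nlinarith [hsq, ha, hb]
end

section
/- Let a, b be real numbers with b > 0 and a·b ≥ 1/4. Then for all natural numbers k and l with k ≥ l, D(k+1) ≤ b · D(k)² · (1 + a/(b · D(l)²)). -/
/-! Since `a * b ≥ 1/4`, the parabola `x ↦ a + b x²` lies above the diagonal (its discriminant
`1 - 4ab` is nonpositive), so `D` is nondecreasing, hence `D n ≥ D 0 = 1`. Writing
`D (k+1) = b D(k)² (1 + a / (b D(k)²))`, the claim follows from `D l ≤ D k`. -/

lemma le_add_mul_sq {a b : ℝ} (hb : 0 < b) (hab : 1 / 4 ≤ a * b) (x : ℝ) :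
    x ≤ a + b * x ^ 2 := by
  -- `4b (a + b x² - x) = (2bx - 1)² + (4ab - 1)`
  nlinarith [sq_nonneg (2 * b * x - 1)]

lemma add_mul_sq_le_mul_sq_mul {a b x y : ℝ} (ha : 0 ≤ a) (hb : 0 < b) (hy : 0 < y)
    (hyx : y ≤ x) : a + b * x ^ 2 ≤ b * x ^ 2 * (1 + a / (b * y ^ 2)) := by
  have hsq : y ^ 2 ≤ x ^ 2 := pow_le_pow_left₀ hy.le hyx 2
  have hratio : 1 ≤ x ^ 2 / y ^ 2 := (one_le_div (by positivity)).2 hsq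
  calc a + b * x ^ 2 ≤ b * x ^ 2 + a * (x ^ 2 / y ^ 2) := by
        nlinarith [mul_le_mul_of_nonneg_left hratio ha]
    _ = b * x ^ 2 * (1 + a / (b * y ^ 2)) := by field_simp

theorem stmt_2 (a b : ℝ) (hb : 0 < b) (hab : a * b ≥ 1/4)
    (D : ℕ → ℝ) (hD0 : D 0 = 1) (hD : ∀ n, D (n + 1) = a + b * D n ^ 2) :
    ∀ k l : ℕ, k ≥ l → D (k + 1) ≤ b * D k ^ 2 * (1 + a / (b * D l ^ 2)) := by
  intro k l hkl
  have hmono : Monotone D :=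
    monotone_nat_of_le_succ fun n => (hD n).symm ▸ le_add_mul_sq hb hab (D n)
  have hpos : 0 < D l := one_pos.trans_le (hD0 ▸ hmono (Nat.zero_le l))
  have ha : 0 ≤ a := (pos_of_mul_pos_left (by linarith) hb.le).le
  rw [hD k]
  exact add_mul_sq_le_mul_sq_mul ha hb hpos (hmono hkl)
end

section
/- Let a, b be real numbers with b > 0 and a·b ≥ 1/4. Then for all natural numbers k ≥ 1 and l ≥ 1, the ratio b·D(k + l) / (b·D(l))^(2^k) satisfies the bilateral bound 1 ≤ b·D(k + l) / (b·D(l))^(2^k) ≤ (1 + a/(b·D(l)²))^(2^k − 1). -/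
/-!
Put `y n = b * D (n + l)`, so that `y (n + 1) = a * b + y n ^ 2`. Since `a * b > 0`, `y (n + 1) ≥ y n ^ 2`,
which gives the lower bound. For the upper bound let `x = y 0`, `q = 1 + a * b / x ^ 2` and
`U k = x ^ 2 ^ k * q ^ (2 ^ k - 1)`; then `U (k + 1) = q * U k ^ 2`, and `y k ≤ U k` propagates as soon as
`a * b ≤ (q - 1) * U k ^ 2`, i.e. `x ≤ U k`. This holds because `U k = x * (x * q) ^ (2 ^ k - 1)` and
`x * q = x + a * b / x ≥ 2 √(a * b) ≥ 1`.
-/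

namespace QuadraticRecurrence

variable {s : ℝ} {y : ℕ → ℝ}

theorem pow_two_pow_le (h0 : 0 ≤ y 0) (hy : ∀ n, y n ^ 2 ≤ y (n + 1)) (k : ℕ) :
    y 0 ^ 2 ^ k ≤ y k := by
  induction k with
  | zero => simp
  | succ k ih =>
    calc y 0 ^ 2 ^ (k + 1) = (y 0 ^ 2 ^ k) ^ 2 := by rw [pow_succ, pow_mul]
      _ ≤ y k ^ 2 := pow_le_pow_left₀ (by positivity) ih 2
      _ ≤ y (k + 1) := hy k

theorem le_of_supersolution {U : ℕ → ℝ} {q : ℝ} (hy : ∀ n, y (n + 1) = s + y n ^ 2)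
    (hy_nonneg : ∀ n, 0 ≤ y n) (hU : ∀ n, U (n + 1) = q * U n ^ 2)
    (hslack : ∀ n, s ≤ (q - 1) * U n ^ 2) (h0 : y 0 ≤ U 0) (k : ℕ) : y k ≤ U k := by
  induction k with
  | zero => exact h0
  | succ k ih =>
    have hsq : y k ^ 2 ≤ U k ^ 2 := pow_le_pow_left₀ (hy_nonneg k) ih 2
    rw [hy, hU]
    linarith [hslack k]

theorem pos (hs : 0 < s) (hy : ∀ n, y (n + 1) = s + y n ^ 2) (h0 : 0 < y 0) (n : ℕ) : 0 < y n := by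
  cases n with
  | zero => exact h0
  | succ n => rw [hy]; positivity

theorem one_le_mul_one_add_div_sq {x : ℝ} (hx : 0 < x) (hs : 1 / 4 ≤ s) :
    1 ≤ x * (1 + s / x ^ 2) := by
  have hxq : x * (1 + s / x ^ 2) = x + s / x := by field_simp
  rw [hxq, ← sub_nonneg]
  have : x + s / x - 1 = ((x - 1 / 2) ^ 2 + (s - 1 / 4)) / x := by field_simp; ring
  rw [this]
  positivity

theorem pow_two_pow_mul_succ (x q : ℝ) (k : ℕ) :
    x ^ 2 ^ (k + 1) * q ^ (2 ^ (k + 1) - 1) = q * (x ^ 2 ^ k * q ^ (2 ^ k - 1)) ^ 2 := by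
  have h : 2 ^ (k + 1) - 1 = 2 * (2 ^ k - 1) + 1 := by
    have := Nat.one_le_two_pow (n := k)
    rw [pow_succ]
    omega
  rw [h, pow_succ 2 k, pow_mul]
  ring

theorem le_pow_two_pow_mul (hs : 1 / 4 ≤ s) (hy : ∀ n, y (n + 1) = s + y n ^ 2) (h0 : 0 < y 0)
    (k : ℕ) : y k ≤ y 0 ^ 2 ^ k * (1 + s / y 0 ^ 2) ^ (2 ^ k - 1) := by
  set x := y 0
  set q := 1 + s / x ^ 2
  have hx_le (n : ℕ) : x ≤ x ^ 2 ^ n * q ^ (2 ^ n - 1) := by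
    have h : x ^ 2 ^ n * q ^ (2 ^ n - 1) = x * (x * q) ^ (2 ^ n - 1) := by
      rw [mul_pow, ← mul_assoc, ← pow_succ', Nat.sub_add_cancel Nat.one_le_two_pow]
    rw [h]
    exact le_mul_of_one_le_right h0.le (one_le_pow₀ (one_le_mul_one_add_div_sq h0 hs))
  refine le_of_supersolution (U := fun n => x ^ 2 ^ n * q ^ (2 ^ n - 1)) hy
    (fun n => (pos (by linarith) hy h0 n).le) (pow_two_pow_mul_succ x q) (fun n => ?_) (hx_le 0) k
  calc s = s / x ^ 2 * x ^ 2 := by field_simp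
    _ ≤ (q - 1) * (x ^ 2 ^ n * q ^ (2 ^ n - 1)) ^ 2 := by
      rw [show q - 1 = s / x ^ 2 by ring]
      gcongr
      exact hx_le n

end QuadraticRecurrence

open QuadraticRecurrence in
theorem stmt_4_general (a b : ℝ) (hb : 0 < b) (hab : a * b ≥ 1/4)
    (D : ℕ → ℝ) (hD : ∀ n, D (n + 1) = a + b * D n ^ 2) :
    ∀ k l : ℕ, 1 ≤ k → 1 ≤ l →
      1 ≤ b * D (k + l) / (b * D l) ^ (2 ^ k) ∧
      b * D (k + l) / (b * D l) ^ (2 ^ k) ≤ (1 + a / (b * D l ^ 2)) ^ (2 ^ k - 1) := by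
  intro k l _ hl
  set y : ℕ → ℝ := fun n => b * D (n + l)
  have hy (n : ℕ) : y (n + 1) = a * b + y n ^ 2 := by
    simp only [y, add_right_comm n 1 l, hD]
    ring
  have hy0 : 0 < y 0 := by
    obtain ⟨m, rfl⟩ := Nat.exists_eq_add_of_le' hl
    simp only [y, zero_add, hD]
    nlinarith [sq_nonneg (b * D m)]
  have hDl : D l ≠ 0 := right_ne_zero_of_mul (by simpa [y] using hy0.ne')
  have hlower := pow_two_pow_le hy0.le (fun n => by rw [hy]; linarith) k
  have hupper := le_pow_two_pow_mul hab.le hy hy0 k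
  simp only [y, zero_add] at hlower hupper hy0
  have hc : a / (b * D l ^ 2) = a * b / (b * D l) ^ 2 := by field_simp
  rw [hc, le_div_iff₀ (by positivity), div_le_iff₀ (by positivity), one_mul]
  exact ⟨hlower, hupper.trans_eq (mul_comm _ _)⟩

theorem stmt_4 (a b : ℝ) (hb : 0 < b) (hab : a * b ≥ 1/4)
    (D : ℕ → ℝ) (hD0 : D 0 = 1) (hD : ∀ n, D (n + 1) = a + b * D n ^ 2) :
    ∀ k l : ℕ, 1 ≤ k → 1 ≤ l →
      1 ≤ b * D (k + l) / (b * D l) ^ (2 ^ k) ∧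
      b * D (k + l) / (b * D l) ^ (2 ^ k) ≤ (1 + a / (b * D l ^ 2)) ^ (2 ^ k - 1) :=
  stmt_4_general a b hb hab D hD
end

section
/- Let a, b be real numbers with b > 0 and a·b > 1/4. Then for every fixed natural number k ≥ 1, the limit as l → ∞ of b·D(k + l) / (b·D(l))^(2^k) equals 1. -/
/-! With `E n = b * D n` the recursion becomes `E (n + 1) = a * b + E n ^ 2`. Since
`x ^ 2 - x ≥ -1/4`, every step raises `E` by at least `a * b - 1/4 > 0`, so `E → ∞`. Then
`E (k + 1 + l) / E l ^ 2 ^ (k + 1) = (E (k + l) / E l ^ 2 ^ k) ^ 2 * (1 + a * b / E (k + l) ^ 2)`,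
and the last factor tends to `1`, which gives the limit by induction on `k`. -/

open Filter Topology

lemma add_sq_div_sq_eq_div_sq_mul {X : ℝ} (Y c : ℝ) (hX : X ≠ 0) :
    (c + X ^ 2) / Y ^ 2 = (X / Y) ^ 2 * (1 + c / X ^ 2) := by
  field_simp
  ring

section SuccEqAddSq

variable {c : ℝ} {x : ℕ → ℝ}

lemma add_mul_le_of_succ_eq_add_sq (hx : ∀ n, x (n + 1) = c + x n ^ 2) (n : ℕ) :
    x 0 + n * (c - 1 / 4) ≤ x n := by
  induction n with
  | zero => simp
  | succ n ih =>
    rw [hx]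
    push_cast
    nlinarith [sq_nonneg (x n - 1 / 2)]

lemma tendsto_atTop_of_succ_eq_add_sq (hc : 1 / 4 < c) (hx : ∀ n, x (n + 1) = c + x n ^ 2) :
    Tendsto x atTop atTop :=
  tendsto_atTop_mono (add_mul_le_of_succ_eq_add_sq hx) <|
    tendsto_atTop_add_const_left _ _ <|
      tendsto_natCast_atTop_atTop.atTop_mul_const (by linarith)

lemma tendsto_div_pow_two_pow_of_succ_eq_add_sq (hx : ∀ n, x (n + 1) = c + x n ^ 2)
    (hx_top : Tendsto x atTop atTop) (k : ℕ) :
    Tendsto (fun l => x (k + l) / x l ^ 2 ^ k) atTop (𝓝 1) := by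
  have hshift : ∀ m, Tendsto (fun l => x (m + l)) atTop atTop := fun m =>
    hx_top.comp (tendsto_atTop_mono (Nat.le_add_left · m) tendsto_id)
  induction k with
  | zero =>
    refine tendsto_const_nhds.congr' ?_
    filter_upwards [hx_top.eventually_ne_atTop 0] with l hl
    simp [hl]
  | succ k ih =>
    have hsplit : (fun l => (x (k + l) / x l ^ 2 ^ k) ^ 2 * (1 + c / x (k + l) ^ 2))
        =ᶠ[atTop] fun l => x (k + 1 + l) / x l ^ 2 ^ (k + 1) := by
      filter_upwards [(hshift k).eventually_ne_atTop 0] with l hl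
      rw [show k + 1 + l = k + l + 1 by omega, hx, pow_succ 2 k, pow_mul]
      exact (add_sq_div_sq_eq_div_sq_mul _ c hl).symm
    have hcorr : Tendsto (fun l => 1 + c / x (k + l) ^ 2) atTop (𝓝 1) := by
      simpa using tendsto_const_nhds.add
        (tendsto_const_nhds.div_atTop ((tendsto_pow_atTop two_ne_zero).comp (hshift k)))
    simpa using ((ih.pow 2).mul hcorr).congr' hsplit

end SuccEqAddSq

theorem stmt_6_general (a b : ℝ) (hab : a * b > 1/4)
    (D : ℕ → ℝ) (hD : ∀ n, D (n + 1) = a + b * D n ^ 2)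
    (k : ℕ) :
    Filter.Tendsto (fun l : ℕ => b * D (k + l) / (b * D l) ^ (2 ^ k))
      Filter.atTop (nhds 1) := by
  have hE : ∀ n, b * D (n + 1) = a * b + (b * D n) ^ 2 := fun n => by rw [hD]; ring
  exact tendsto_div_pow_two_pow_of_succ_eq_add_sq (x := fun n => b * D n) hE
    (tendsto_atTop_of_succ_eq_add_sq hab hE) k

theorem stmt_6 (a b : ℝ) (hb : 0 < b) (hab : a * b > 1/4)
    (D : ℕ → ℝ) (hD0 : D 0 = 1) (hD : ∀ n, D (n + 1) = a + b * D n ^ 2)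
    (k : ℕ) (hk : 1 ≤ k) :
    Filter.Tendsto (fun l : ℕ => b * D (k + l) / (b * D l) ^ (2 ^ k))
      Filter.atTop (nhds 1) :=
  stmt_6_general a b hab D hD k
end

section
/- Let a, b be real numbers with b > 0 and a·b > 1/4. Then the logarithmic index of increase of the sequence D equals log 2; that is, the limit as n → ∞ of (1/n)·log(log D(n)) equals log 2. -/
/-!
Put `x n = b * D n`; then `x (n + 1) = x n ^ 2 + a * b`. Because `a * b > 1/4`, each step adds at
least `a * b - 1/4` to `x n`, so `x n → ∞`, and from then on `x n ^ 2 ≤ x (n + 1) ≤ 2 * x n ^ 2`.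
Hence `log x n`, and with it `log D n = log x n - log b`, is squeezed between two positive multiples
of `2 ^ n`, so `log (log D n) = n * log 2 + O(1)`.
-/

open Real Filter Topology Asymptotics

theorem tendsto_one_div_mul_of_isBigO_sub {g : ℕ → ℝ} {L : ℝ}
    (h : (fun n : ℕ => g n - n * L) =O[atTop] fun _ => (1 : ℝ)) :
    Tendsto (fun n : ℕ => (1 / (n : ℝ)) * g n) atTop (𝓝 L) := by
  have hdiv : Tendsto (fun n : ℕ => (1 / (n : ℝ)) * (g n - n * L)) atTop (𝓝 0) :=
    ((isBigO_refl (fun n : ℕ => 1 / (n : ℝ)) atTop).mul h).trans_tendsto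
      (by simpa using tendsto_one_div_atTop_nhds_zero_nat (𝕜 := ℝ))
  rw [← add_zero L]
  refine (hdiv.const_add L).congr' ?_
  filter_upwards [eventually_ne_atTop 0] with n hn
  field_simp
  ring

theorem isBigO_log_sub_mul_log_of_isTheta_pow {f : ℕ → ℝ} {r : ℝ} (hr : 0 < r)
    (hf : f =Θ[atTop] fun n => r ^ n) :
    (fun n : ℕ => log (f n) - n * log r) =O[atTop] fun _ => (1 : ℝ) := by
  obtain ⟨c₁, hc₁, hup⟩ := hf.1.exists_pos
  obtain ⟨c₂, hc₂, hlow⟩ := hf.2.exists_pos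
  refine IsBigO.of_bound (max |log c₁| |log c₂|) ?_
  filter_upwards [hup.bound, hlow.bound] with n hn₁ hn₂
  have hrn : 0 < r ^ n := pow_pos hr n
  rw [Real.norm_of_nonneg hrn.le] at hn₁ hn₂
  have hfn : 0 < ‖f n‖ := pos_of_mul_pos_right (hrn.trans_le hn₂) hc₂.le
  have hlog : log (f n) - n * log r = log (‖f n‖ / r ^ n) := by
    rw [log_div hfn.ne' hrn.ne', log_pow, Real.norm_eq_abs, log_abs]
  rw [hlog, norm_one, mul_one, Real.norm_eq_abs, abs_le]
  constructor
  · have : c₂⁻¹ ≤ ‖f n‖ / r ^ n := by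
      rw [le_div_iff₀ hrn, inv_mul_le_iff₀ hc₂]; exact hn₂
    have := log_le_log (by positivity) this
    rw [log_inv] at this
    linarith [le_abs_self (log c₂), le_max_right |log c₁| |log c₂|]
  · have : ‖f n‖ / r ^ n ≤ c₁ := by rw [div_le_iff₀ hrn]; exact hn₁
    have := log_le_log (by positivity) this
    linarith [le_abs_self (log c₁), le_max_left |log c₁| |log c₂|]

theorem pow_two_pow_le_of_sq_le {y : ℕ → ℝ} (h0 : 0 ≤ y 0) (h : ∀ n, y n ^ 2 ≤ y (n + 1))
    (n : ℕ) : y 0 ^ 2 ^ n ≤ y n := by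
  induction n with
  | zero => simp
  | succ n ih =>
    calc y 0 ^ 2 ^ (n + 1) = (y 0 ^ 2 ^ n) ^ 2 := by ring
      _ ≤ y n ^ 2 := by gcongr
      _ ≤ y (n + 1) := h n

theorem le_pow_two_pow_of_le_sq {y : ℕ → ℝ} (h0 : ∀ n, 0 ≤ y n) (h : ∀ n, y (n + 1) ≤ y n ^ 2)
    (n : ℕ) : y n ≤ y 0 ^ 2 ^ n := by
  induction n with
  | zero => simp
  | succ n ih =>
    calc y (n + 1) ≤ y n ^ 2 := h n
      _ ≤ (y 0 ^ 2 ^ n) ^ 2 := by gcongr; exact h0 n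
      _ = y 0 ^ 2 ^ (n + 1) := by ring

theorem two_pow_mul_log_le_log_of_sq_le {x : ℕ → ℝ} {N : ℕ} (hN : 0 < x N)
    (h : ∀ n ≥ N, x n ^ 2 ≤ x (n + 1)) (k : ℕ) : 2 ^ k * log (x N) ≤ log (x (N + k)) := by
  have := pow_two_pow_le_of_sq_le (y := fun k => x (N + k)) hN.le
    (fun k => h (N + k) (by omega)) k
  simpa using log_le_log (by positivity) this

theorem log_le_two_pow_mul_log_of_le_mul_sq {x : ℕ → ℝ} {K : ℝ} {N : ℕ} (hK : 1 ≤ K)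
    (hpos : ∀ n ≥ N, 0 < x n) (h : ∀ n ≥ N, x (n + 1) ≤ K * x n ^ 2) (k : ℕ) :
    log (x (N + k)) ≤ 2 ^ k * log (K * x N) := by
  have hxk : 0 < x (N + k) := hpos _ (by omega)
  have hKx : ∀ k, 0 ≤ K * x (N + k) := fun k => by
    have := hpos (N + k) (by omega); positivity
  have := le_pow_two_pow_of_le_sq (y := fun k => K * x (N + k)) hKx
    (fun k => by have := h (N + k) (by omega); simp only [← add_assoc]; nlinarith) k
  calc log (x (N + k)) ≤ log (K * x (N + k)) :=
        log_le_log hxk (le_mul_of_one_le_left hxk.le hK)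
    _ ≤ log ((K * x N) ^ 2 ^ k) := log_le_log (by positivity) (by simpa using this)
    _ = 2 ^ k * log (K * x N) := by simp [log_pow]

theorem isTheta_log_two_pow_of_sq_le_of_le_mul_sq {x : ℕ → ℝ} {K : ℝ} (hK : 1 ≤ K)
    (hx : Tendsto x atTop atTop)
    (h : ∀ᶠ n in atTop, x n ^ 2 ≤ x (n + 1) ∧ x (n + 1) ≤ K * x n ^ 2) :
    (fun n => log (x n)) =Θ[atTop] fun n => (2 : ℝ) ^ n := by
  obtain ⟨N, hN⟩ := eventually_atTop.1 (h.and (hx.eventually_gt_atTop 1))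
  have hxN : 1 < x N := (hN N le_rfl).2
  have hpos : ∀ n ≥ N, 0 < x n := fun n hn => zero_lt_one.trans (hN n hn).2
  have hlow := two_pow_mul_log_le_log_of_sq_le (hpos N le_rfl) fun n hn => (hN n hn).1.1
  have hup := log_le_two_pow_mul_log_of_le_mul_sq hK hpos fun n hn => (hN n hn).1.2
  have hlogN : 0 < log (x N) := log_pos hxN
  have h2N : (0 : ℝ) < 2 ^ N := by positivity
  constructor
  · refine IsBigO.of_bound (log (K * x N) / 2 ^ N) ?_
    filter_upwards [eventually_ge_atTop N] with n hn
    obtain ⟨k, rfl⟩ := Nat.exists_eq_add_of_le hn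
    have hk : 0 ≤ log (x (N + k)) := le_trans (by positivity) (hlow k)
    rw [Real.norm_of_nonneg hk, Real.norm_of_nonneg (by positivity), pow_add]
    calc log (x (N + k)) ≤ 2 ^ k * log (K * x N) := hup k
      _ = log (K * x N) / 2 ^ N * (2 ^ N * 2 ^ k) := by field_simp
  · refine IsBigO.of_bound (2 ^ N / log (x N)) ?_
    filter_upwards [eventually_ge_atTop N] with n hn
    obtain ⟨k, rfl⟩ := Nat.exists_eq_add_of_le hn
    have hk : 0 ≤ log (x (N + k)) := le_trans (by positivity) (hlow k)
    rw [Real.norm_of_nonneg (by positivity), Real.norm_of_nonneg hk, pow_add,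
      div_mul_eq_mul_div, le_div_iff₀ hlogN]
    nlinarith [hlow k]

section SqAddConst

variable {x : ℕ → ℝ} {c : ℝ}

theorem tendsto_atTop_of_eq_sq_add (hc : 1 / 4 < c) (hx : ∀ n, x (n + 1) = x n ^ 2 + c) :
    Tendsto x atTop atTop := by
  have hstep : ∀ n, x n + (c - 1 / 4) ≤ x (n + 1) := fun n => by
    rw [hx n]; nlinarith [sq_nonneg (x n - 1 / 2)]
  have hlin : ∀ n : ℕ, x 0 + n * (c - 1 / 4) ≤ x n := fun n => by
    induction n with
    | zero => simp
    | succ n ih => push_cast; linarith [hstep n]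
  exact tendsto_atTop_mono hlin <| tendsto_atTop_add_const_left _ _ <|
    tendsto_natCast_atTop_atTop.atTop_mul_const (by linarith)

theorem isTheta_log_of_eq_sq_add (hc : 1 / 4 < c) (hx : ∀ n, x (n + 1) = x n ^ 2 + c) :
    (fun n => log (x n)) =Θ[atTop] fun n => (2 : ℝ) ^ n := by
  have htop := tendsto_atTop_of_eq_sq_add hc hx
  refine isTheta_log_two_pow_of_sq_le_of_le_mul_sq one_le_two htop ?_
  filter_upwards [htop.eventually_ge_atTop (max c 1)] with n hn
  have hc' : c ≤ x n := le_of_max_le_left hn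
  have h1 : 1 ≤ x n := le_of_max_le_right hn
  rw [hx n]
  constructor <;> nlinarith

end SqAddConst

theorem stmt_7_general (a b : ℝ) (hb : 0 < b) (hab : a * b > 1/4)
    (D : ℕ → ℝ) (hD : ∀ n, D (n + 1) = a + b * D n ^ 2) :
    Filter.Tendsto (fun n : ℕ => (1 / (n : ℝ)) * Real.log (Real.log (D n)))
      Filter.atTop (nhds (Real.log 2)) := by
  set x : ℕ → ℝ := fun n => b * D n
  have hx : ∀ n, x (n + 1) = x n ^ 2 + a * b := fun n => by simp only [x, hD]; ring
  have hlog_D : (fun n => log (D n)) =ᶠ[atTop] fun n => log (x n) + -log b := by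
    filter_upwards [(tendsto_atTop_of_eq_sq_add hab hx).eventually_gt_atTop 0] with n hn
    have hD_ne : D n ≠ 0 := by rintro h; simp [x, h] at hn
    simp only [x]; rw [log_mul hb.ne' hD_ne]; ring
  have hlogb : (fun _ => -log b) =o[atTop] fun n : ℕ => (2 : ℝ) ^ n :=
    isLittleO_const_left.2 <| Or.inr <|
      tendsto_norm_atTop_atTop.comp (tendsto_pow_atTop_atTop_of_one_lt one_lt_two)
  exact tendsto_one_div_mul_of_isBigO_sub <| isBigO_log_sub_mul_log_of_isTheta_pow two_pos <|
    hlog_D.trans_isTheta ((isTheta_log_of_eq_sq_add hab hx).add_isLittleO hlogb)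

theorem stmt_7 (a b : ℝ) (hb : 0 < b) (hab : a * b > 1/4)
    (D : ℕ → ℝ) (hD0 : D 0 = 1) (hD : ∀ n, D (n + 1) = a + b * D n ^ 2) :
    Filter.Tendsto (fun n : ℕ => (1 / (n : ℝ)) * Real.log (Real.log (D n)))
      Filter.atTop (nhds (Real.log 2)) :=
  stmt_7_general a b hb hab D hD
end

section
/- Let a, b be real numbers with b > 0 and a·b > 1/4. Then the sequence n ↦ (b·D(n))^(1/2^n) is eventually monotone increasing and converges to a finite limit c > 1, and for every n one has b·D(n) ≤ c^(2^n). -/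
theorem stmt_8 (a b : ℝ) (hb : 0 < b) (hab : a * b > 1/4)
    (D : ℕ → ℝ) (hD0 : D 0 = 1) (hD : ∀ n, D (n + 1) = a + b * D n ^ 2) :
    ∃ c : ℝ, 1 < c ∧
      (∃ N : ℕ, ∀ m n : ℕ, N ≤ m → m ≤ n →
        (b * D m) ^ ((1 : ℝ) / 2 ^ m) ≤ (b * D n) ^ ((1 : ℝ) / 2 ^ n)) ∧
      Filter.Tendsto (fun n : ℕ => (b * D n) ^ ((1 : ℝ) / 2 ^ n))
        Filter.atTop (nhds c) ∧
      ∀ n : ℕ, b * D n ≤ c ^ (2 ^ n) := by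
  set E : ℕ → ℝ := fun n => b * D n with hEdef
  have hab0 : (0:ℝ) < a * b := lt_trans (by norm_num) hab
  have hE0 : E 0 = b := by simp [hEdef, hD0]
  have hErec : ∀ n, E (n+1) = a * b + (E n)^2 := by
    intro n; simp only [hEdef, hD n]; ring
  have hEpos : ∀ n, 0 < E n := by
    intro n
    induction n with
    | zero => rw [hE0]; exact hb
    | succ k ih => rw [hErec]; positivity
  set f : ℕ → ℝ := fun n => (E n) ^ ((1:ℝ) / 2 ^ n) with hfdef
  have hfpos : ∀ n, 0 < f n := fun n => Real.rpow_pos_of_pos (hEpos n) _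
  have hexp : ∀ n : ℕ, (1:ℝ) / 2 ^ n = 2 * ((1:ℝ) / 2 ^ (n+1)) := by
    intro n
    rw [pow_succ]
    field_simp
  have hmono : Monotone f := by
    apply monotone_nat_of_le_succ
    intro n
    have h1 : (E n)^2 ≤ E (n+1) := by
      rw [hErec]; nlinarith [hab0]
    have h2 : f n = ((E n)^2) ^ ((1:ℝ) / 2 ^ (n+1)) := by
      rw [hfdef]
      simp only
      rw [hexp n, ← Real.rpow_natCast (E n) 2, ← Real.rpow_mul (hEpos n).le]
      norm_num
    rw [h2]
    exact Real.rpow_le_rpow (by positivity) h1 (by positivity)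
  -- boundedness
  set G : ℕ → ℝ := fun n => max 1 (E n) with hGdef
  have hG1 : ∀ n, (1:ℝ) ≤ G n := fun n => le_max_left _ _
  have hGpos : ∀ n, (0:ℝ) < G n := fun n => lt_of_lt_of_le one_pos (hG1 n)
  have hEG : ∀ n, E n ≤ G n := fun n => le_max_right _ _
  have hGrec : ∀ n, G (n+1) ≤ (1 + a*b) * (G n)^2 := by
    intro n
    have h1 : (1:ℝ) ≤ (1 + a*b) * (G n)^2 := by nlinarith [hG1 n, hab0]
    have h2 : E (n+1) ≤ (1 + a*b) * (G n)^2 := by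
      rw [hErec]
      have hsq : E n^2 ≤ G n^2 := pow_le_pow_left₀ (hEpos n).le (hEG n) 2
      have hGn1 : (1:ℝ) ≤ G n ^ 2 := one_le_pow₀ (hG1 n)
      have h5 : a*b ≤ a*b * G n^2 := le_mul_of_one_le_right hab0.le hGn1
      nlinarith [hsq, h5]
    exact max_le h1 h2
  set A : ℝ := Real.log (G 0) with hAdef
  set B : ℝ := Real.log (1 + a*b) with hBdef
  have hA0 : 0 ≤ A := Real.log_nonneg (hG1 0)
  have hB0 : 0 ≤ B := Real.log_nonneg (by linarith)
  have hlog : ∀ n : ℕ, Real.log (G n) ≤ 2^n * A + (2^n - 1) * B := by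
    intro n
    induction n with
    | zero => simp [hAdef]
    | succ k ih =>
      have h1 : Real.log (G (k+1)) ≤ B + 2 * Real.log (G k) := by
        calc Real.log (G (k+1)) ≤ Real.log ((1 + a*b) * (G k)^2) :=
              Real.log_le_log (hGpos (k+1)) (hGrec k)
          _ = B + 2 * Real.log (G k) := by
              rw [Real.log_mul (by positivity) (by positivity), Real.log_pow]
              push_cast; ring
      calc Real.log (G (k+1)) ≤ B + 2 * (2^k * A + (2^k - 1) * B) := by linarith
        _ = 2^(k+1) * A + (2^(k+1) - 1) * B := by rw [pow_succ]; ring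
  have hfbound : ∀ n, f n ≤ Real.exp (A + B) := by
    intro n
    have h1 : f n ≤ (G n) ^ ((1:ℝ) / 2 ^ n) :=
      Real.rpow_le_rpow (hEpos n).le (hEG n) (by positivity)
    have h2 : (G n) ^ ((1:ℝ) / 2 ^ n) = Real.exp (Real.log (G n) * ((1:ℝ)/2^n)) :=
      Real.rpow_def_of_pos (hGpos n) _
    have h3 : Real.log (G n) * ((1:ℝ)/2^n) ≤ A + B := by
      have h4 : Real.log (G n) ≤ 2^n * (A + B) := by
        have := hlog n
        have h5 : (1:ℝ) ≤ 2^n := one_le_pow₀ (by norm_num : (1:ℝ) ≤ 2)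
        nlinarith
      calc Real.log (G n) * ((1:ℝ)/2^n) ≤ (2^n * (A+B)) * ((1:ℝ)/2^n) :=
              mul_le_mul_of_nonneg_right h4 (by positivity)
        _ = A + B := by field_simp
    calc f n ≤ Real.exp (Real.log (G n) * ((1:ℝ)/2^n)) := h2 ▸ h1
      _ ≤ Real.exp (A + B) := Real.exp_le_exp.mpr h3
  have hBdd : BddAbove (Set.range f) := by
    refine ⟨Real.exp (A + B), ?_⟩
    rintro x ⟨n, rfl⟩
    exact hfbound n
  set c : ℝ := ⨆ n, f n with hcdef
  have htend : Filter.Tendsto f Filter.atTop (nhds c) :=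
    tendsto_atTop_ciSup hmono hBdd
  have hfc : ∀ n, f n ≤ c := fun n => le_ciSup hBdd n
  -- c > 1
  have hgrow : ∀ n : ℕ, b + n * (a*b - 1/4) ≤ E n := by
    intro n
    induction n with
    | zero => simp [hE0]
    | succ k ih =>
      rw [hErec]
      push_cast
      nlinarith [hEpos k, sq_nonneg (E k - 1/2)]
  have hc1 : 1 < c := by
    obtain ⟨N, hN⟩ := exists_nat_gt ((1 - b) / (a*b - 1/4))
    have hε : (0:ℝ) < a*b - 1/4 := by linarith
    have h1 : (1:ℝ) < E N := by
      have h2 : (1 - b) < N * (a*b - 1/4) := by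
        rw [div_lt_iff₀ hε] at hN; linarith
      have := hgrow N
      linarith
    have h3 : 1 < f N := by
      rw [hfdef]
      exact (Real.one_lt_rpow_iff_of_pos (hEpos N)).mpr (Or.inl ⟨h1, by positivity⟩)
    exact lt_of_lt_of_le h3 (hfc N)
  refine ⟨c, hc1, ⟨0, fun m n _ hmn => hmono hmn⟩, htend, ?_⟩
  intro n
  have h1 : f n ^ (2^n : ℕ) ≤ c ^ (2^n : ℕ) :=
    pow_le_pow_left₀ (hfpos n).le (hfc n) _
  have h2 : f n ^ (2^n : ℕ) = E n := by
    rw [hfdef]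
    simp only
    rw [← Real.rpow_natCast ((E n) ^ ((1:ℝ)/2^n)) (2^n), ← Real.rpow_mul (hEpos n).le]
    push_cast
    rw [one_div, inv_mul_cancel₀ (by positivity), Real.rpow_one]
  calc b * D n = f n ^ (2^n : ℕ) := h2.symm
    _ ≤ c ^ (2^n : ℕ) := h1
end

section
/- Let a, b be positive integers (so that a·b ≥ 1/4 automatically holds and every D(n) is a positive integer). Then for all natural numbers k ≥ 1 and l ≥ 1, one has b^(2^k − 1) · D(l)^(2^k) ≤ D(k + l) ≤ ⌊(1 + a/(b·D(l)²))^(2^k − 1) · b^(2^k − 1) · D(l)^(2^k)⌋, where ⌊z⌋ denotes the integer part (floor) of the real number z. -/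
theorem stmt_10 (a b : ℤ) (ha : 0 < a) (hb : 0 < b)
    (D : ℕ → ℤ) (hD0 : D 0 = 1) (hD : ∀ n, D (n + 1) = a + b * D n ^ 2) :
    ∀ k l : ℕ, 1 ≤ k → 1 ≤ l →
      b ^ (2 ^ k - 1) * D l ^ (2 ^ k) ≤ D (k + l) ∧
      D (k + l) ≤
        ⌊(1 + (a : ℝ) / ((b : ℝ) * (D l : ℝ) ^ 2)) ^ (2 ^ k - 1) *
          (b : ℝ) ^ (2 ^ k - 1) * (D l : ℝ) ^ (2 ^ k)⌋ := by
  have hpos : ∀ n, 0 < D n := by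
    intro n; induction n with
    | zero => simp [hD0]
    | succ n ih => rw [hD]; nlinarith [sq_nonneg (D n)]
  intro k l hk hl
  have hDl : (1:ℤ) ≤ D l := hpos l
  have hDlR : (0:ℝ) < (D l : ℝ) := by exact_mod_cast hpos l
  have hbR : (0:ℝ) < (b:ℝ) := by exact_mod_cast hb
  have haR : (0:ℝ) < (a:ℝ) := by exact_mod_cast ha
  set c : ℝ := (a:ℝ) / ((b:ℝ) * (D l:ℝ)^2) with hc
  have hcpos : 0 < c := by positivity
  have hcb : c * ((b:ℝ) * (D l:ℝ)^2) = (a:ℝ) := by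
    rw [hc]; field_simp
  have main : ∀ k, 1 ≤ k →
      b ^ (2 ^ k - 1) * D l ^ (2 ^ k) ≤ D (k + l) ∧
      (D (k + l) : ℝ) ≤ (1 + c) ^ (2 ^ k - 1) * (b:ℝ) ^ (2 ^ k - 1) * (D l:ℝ) ^ (2 ^ k) := by
    intro k hk
    induction k, hk using Nat.le_induction with
    | base =>
      constructor
      · rw [show 1 + l = l + 1 from by ring, hD]
        norm_num
        nlinarith
      · have h1 : (D (1 + l) : ℝ) = a + b * (D l:ℝ)^2 := by
          rw [show 1 + l = l + 1 from by ring, hD]; push_cast; ring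
        rw [h1]
        norm_num
        nlinarith [hcb]
    | succ k hk ih =>
      have h2k : 1 ≤ 2^k := Nat.one_le_two_pow
      have he : 2^(k+1) - 1 = 2*(2^k-1) + 1 := by
        have : 2^(k+1) = 2*2^k := by rw [pow_succ]; ring
        omega
      have he2 : 2^(k+1) = 2*(2^k) := by rw [pow_succ]; ring
      have hBpos : (0:ℤ) < b ^ (2^k - 1) * D l ^ (2^k) := by positivity
      have hDkl : (0:ℤ) < D (k + l) := hpos _
      constructor
      · -- lower bound
        rw [he, he2, show k + 1 + l = (k + l) + 1 from by ring, hD]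
        have expand : b ^ (2*(2^k-1)+1) * D l ^ (2*(2^k)) =
            b * (b ^ (2^k-1) * D l ^ (2^k))^2 := by
          rw [mul_pow, ← pow_mul, ← pow_mul]
          rw [pow_succ]
          ring
        rw [expand]
        have hsq : (b ^ (2^k-1) * D l ^ (2^k))^2 ≤ D (k+l)^2 := by
          nlinarith [ih.1, hBpos]
        nlinarith [hsq]
      · -- upper bound
        set X : ℝ := (1 + c) ^ (2 ^ k - 1) * (b:ℝ) ^ (2 ^ k - 1) * (D l:ℝ) ^ (2 ^ k) with hX
        have hDX : (D (k + l) : ℝ) ≤ X := ih.2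
        have hlow : D l ≤ D (k + l) := by
          have h1 : (1:ℤ) ≤ b ^ (2^k - 1) := one_le_pow₀ hb
          have h2 : D l ^ 1 ≤ D l ^ (2^k) := pow_le_pow_right₀ hDl h2k
          calc D l = 1 * D l ^ 1 := by ring
            _ ≤ b ^ (2^k - 1) * D l ^ (2^k) := by
                apply mul_le_mul h1 h2 (by positivity) (by positivity)
            _ ≤ D (k + l) := ih.1
        have hDlX : (D l : ℝ) ≤ X := le_trans (by exact_mod_cast hlow) hDX
        have hDklR : (0:ℝ) < (D (k+l) : ℝ) := by exact_mod_cast hDkl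
        have hval : (D (k + 1 + l) : ℝ) = a + b * (D (k+l):ℝ)^2 := by
          rw [show k + 1 + l = (k + l) + 1 from by ring, hD]; push_cast; ring
        have expand : (1 + c) ^ (2 ^ (k+1) - 1) * (b:ℝ) ^ (2 ^ (k+1) - 1) * (D l:ℝ) ^ (2 ^ (k+1))
            = (1 + c) * (b:ℝ) * X ^ 2 := by
          rw [he, he2, hX]
          rw [mul_pow, mul_pow, ← pow_mul, ← pow_mul, ← pow_mul]
          rw [pow_succ, pow_succ]
          ring
        rw [hval, expand]
        have t1 : (b:ℝ) * ((X - (D (k+l):ℝ)) * (X + (D (k+l):ℝ))) ≥ 0 := by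
          apply mul_nonneg hbR.le
          apply mul_nonneg (by linarith) (by linarith)
        have t2 : c * (b:ℝ) * ((X - (D l:ℝ)) * (X + (D l:ℝ))) ≥ 0 := by
          apply mul_nonneg (by positivity)
          apply mul_nonneg (by linarith) (by linarith)
        nlinarith [t1, t2, hcb]
  refine ⟨(main k hk).1, Int.le_floor.mpr ?_⟩
  exact (main k hk).2
end
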